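/- arXiv:1408.2110 — 3 statements merged into one kernel-verified Lean document; each statement's English description precedes it below -/
import Mathlib

section
/- Let x ∈ A^ℤ be a uniformly recurrent sequence and let u be a nonempty prefix of x. Then the set R_{x,u} of return words to u of x is a circular code. -/
open MeasureTheory Filter Matrix Set

namespace PisotDE

variable {A B : Type*}

/-- Extension of a letter-to-word map to words, by concatenation. -/
def wordApply (σ : A → List B) (w : List A) : List B := w.flatMap σ

/-- Iterates of an endomorphism of the free monoid. -/
def substIter (σ : A → List A) : ℕ → A → List A
  | 0 => fun a => [a]
  | n + 1 => fun a => wordApply (substIter σ n) (σ a)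

/-- σ is a substitution: some letter a has σ(a) starting with a, and |σⁿ(b)| → ∞ for all b. -/
def IsSubstitution (σ : A → List A) : Prop :=
  (∃ a, (σ a).head? = some a) ∧
    ∀ b, Tendsto (fun n => (substIter σ n b).length) atTop atTop

/-- Incidence matrix: entry (i,j) counts occurrences of i in σ(j). -/
def incMat [Fintype A] [DecidableEq A] (σ : A → List A) : Matrix A A ℕ :=
  Matrix.of fun i j => (σ j).count i

/-- Primitivity: a power of the incidence matrix has all entries positive. -/
def IsPrimitive [Fintype A] [DecidableEq A] (σ : A → List A) : Prop :=
  ∃ k : ℕ, ∀ i j, 0 < (incMat σ ^ k) i j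

def IsLeftProper (σ : A → List A) : Prop := ∃ a, ∀ b, (σ b).head? = some a
def IsRightProper (σ : A → List A) : Prop := ∃ a, ∀ b, (σ b).getLast? = some a
def IsProper (σ : A → List A) : Prop := IsLeftProper σ ∧ IsRightProper σ

/-- The factor x_{[i, i+len-1]} of a bi-infinite sequence. -/
def subword (x : ℤ → A) (i : ℤ) (len : ℕ) : List A :=
  List.ofFn fun k : Fin len => x (i + (k : ℕ))

/-- Language of a substitution: words occurring in some σⁿ(b). -/
def lang (σ : A → List A) : Set (List A) := { w | ∃ n b, w <:+: substIter σ n b }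

/-- The substitutive subshift Ω_σ. -/
def Omega (σ : A → List A) : Set (ℤ → A) := { x | ∀ i len, subword x i len ∈ lang σ }

/-- The shift map. -/
def shift (x : ℤ → A) : ℤ → A := fun n => x (n + 1)

/-- The subshift generated by the sequence x (all sequences whose factors are factors of x). -/
def OmegaOf (x : ℤ → A) : Set (ℤ → A) :=
  { z | ∀ i len, ∃ j : ℤ, subword z i len = subword x j len }

/-- y is the image of x under the morphism σ acting on bi-infinite sequences,
concatenating around position 0. -/
def SubstPt (σ : A → List B) (x : ℤ → A) (y : ℤ → B) : Prop :=
  ∃ p : ℤ → ℤ, p 0 = 0 ∧ (∀ n, p (n + 1) = p n + (σ (x n)).length) ∧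
    ∀ (n : ℤ) (k : Fin (σ (x n)).length), y (p n + (k : ℕ)) = (σ (x n)).get k

/-- Image of a set of sequences under the substitution. -/
def substImg (σ : A → List A) (X : Set (ℤ → A)) : Set (ℤ → A) :=
  { y | ∃ x ∈ X, SubstPt σ x y }

/-- The cylinder [a] inside Ω_σ. -/
def cylOmega (σ : A → List A) (a : A) : Set (ℤ → A) := { x ∈ Omega σ | x 0 = a }

/-- ξᵐ(Ω_ξ). -/
def towerBase (σ : A → List A) (m : ℕ) : Set (ℤ → A) := substImg (substIter σ m) (Omega σ)

/-- ξᵐ([a]). -/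
def towerCylElem (σ : A → List A) (m : ℕ) (a : A) : Set (ℤ → A) :=
  { y | ∃ x, x ∈ cylOmega σ a ∧ SubstPt (substIter σ m) x y }

/-- The Kakutani-Rohlin piece S^{-k} ξᵐ([a]) (inside Ω_ξ). -/
def krPiece (σ : A → List A) (m : ℕ) (a : A) (k : ℕ) : Set (ℤ → A) :=
  { x ∈ Omega σ | shift^[k] x ∈ towerCylElem σ m a }

/-- Entrance time of x into the base ξ^{n-1}(Ω_ξ). -/
noncomputable def rTime (σ : A → List A) (n : ℕ) (x : ℤ → A) : ℕ :=
  sInf { k : ℕ | shift^[k] x ∈ towerBase σ (n - 1) }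

/-- The vector s_k(x): s_k(x)_a counts the i with r_k(x) < i ≤ r_{k+1}(x)
such that Sⁱx ∈ ξ^{k-1}([a]). -/
noncomputable def sVec (σ : A → List A) (k : ℕ) (x : ℤ → A) : A → ℤ :=
  fun a => (({ i : ℕ | rTime σ k x < i ∧ i ≤ rTime σ (k + 1) x ∧
      shift^[i] x ∈ towerCylElem σ (k - 1) a }).ncard : ℤ)

/-- λ is an eigenvalue of the measure-theoretic system (Ω, S, μ):
there is a nonzero f ∈ L²(μ) with f∘S = λ f. -/
def IsEigenvalue [MeasurableSpace A] (μ : Measure (ℤ → A)) (lam : ℂ) : Prop :=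
  ∃ f : (ℤ → A) → ℂ, MemLp f 2 μ ∧ ¬ f =ᵐ[μ] 0 ∧
    (fun x => f (shift x)) =ᵐ[μ] fun x => lam * f x

/-- Characteristic polynomial of a natural matrix, over ℂ. -/
noncomputable def charpolyC [Fintype A] [DecidableEq A] (M : Matrix A A ℕ) : Polynomial ℂ :=
  (M.map (Nat.cast : ℕ → ℂ)).charpoly

/-- Pisot type: dominant real root β > 1, every other root β' has 0 < |β'| < 1. -/
def IsPisotType [Fintype A] [DecidableEq A] (M : Matrix A A ℕ) : Prop :=
  ∃ β : ℝ, 1 < β ∧ (charpolyC M).IsRoot (β : ℂ) ∧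
    ∀ z : ℂ, (charpolyC M).IsRoot z → z ≠ (β : ℂ) → 0 < ‖z‖ ∧ ‖z‖ < 1

/-- Weakly irreducible Pisot type: the dominant root is a real Pisot number β > 1,
the other roots are algebraic conjugates of β, 0, or roots of unity. -/
def IsWIPisot [Fintype A] [DecidableEq A] (M : Matrix A A ℕ) : Prop :=
  ∃ β : ℝ, 1 < β ∧ (charpolyC M).IsRoot (β : ℂ) ∧
    (∀ z : ℂ, Polynomial.aeval z (minpoly ℚ ((β : ℝ) : ℂ)) = 0 → z ≠ (β : ℂ) → ‖z‖ < 1) ∧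
    ∀ z : ℂ, (charpolyC M).IsRoot z →
      (Polynomial.aeval z (minpoly ℚ ((β : ℝ) : ℂ)) = 0 ∨ z = 0 ∨ ∃ n : ℕ, 0 < n ∧ z ^ n = 1)

/-- Unimodularity: determinant ±1. -/
def IsUnimodular [Fintype A] [DecidableEq A] (M : Matrix A A ℕ) : Prop :=
  (M.map (Nat.cast : ℕ → ℤ)).det = 1 ∨ (M.map (Nat.cast : ℕ → ℤ)).det = -1

/-- The transpose of the incidence matrix, with real entries. -/
noncomputable def MtR [Fintype A] [DecidableEq A] (σ : A → List A) : Matrix A A ℝ :=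
  ((incMat σ).map (Nat.cast : ℕ → ℝ))ᵀ

/-- The vector μ⃗(n), μ⃗(n)_a = μ(ξ^{n-1}([a])). -/
noncomputable def muVec [MeasurableSpace A] (σ : A → List A) (μ : Measure (ℤ → A)) (n : ℕ) : A → ℝ :=
  fun a => (μ (towerCylElem σ (n - 1) a)).toReal

/-- Rational independence of 1, α_1, …, α_m. -/
def RatIndepOne {m : ℕ} (α : Fin m → ℝ) : Prop :=
  ∀ (c₀ : ℤ) (c : Fin m → ℤ), (c₀ : ℝ) + ∑ i, (c i : ℝ) * α i = 0 →
    c₀ = 0 ∧ ∀ i, c i = 0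

/-- The word u occurs in x at position i. -/
def occursAt (x : ℤ → A) (u : List A) (i : ℤ) : Prop :=
  ∀ k : Fin u.length, x (i + (k : ℕ)) = u.get k

/-- Uniform recurrence: every factor occurs with bounded gaps. -/
def UniformlyRecurrent (x : ℤ → A) : Prop :=
  ∀ u : List A, (∃ i, occursAt x u i) →
    ∃ N : ℕ, ∀ i : ℤ, ∃ j : ℤ, i ≤ j ∧ j < i + (N : ℤ) ∧ occursAt x u j

/-- Return words to u of x. -/
def returnWords (x : ℤ → A) (u : List A) : Set (List A) :=
  { w | ∃ i j : ℤ, i < j ∧ occursAt x u i ∧ occursAt x u j ∧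
      (∀ l : ℤ, i < l → l < j → ¬ occursAt x u l) ∧ w = subword x i (j - i).toNat }

/-- Circular code. -/
def IsCircularCode (R : Set (List A)) : Prop :=
  ∀ (l l' : List (List A)) (w s t : List A),
    (∀ v ∈ l, v ∈ R) → (∀ v ∈ l', v ∈ R) → w ∈ R → s ≠ [] →
    w = t ++ s → l.flatten = s ++ l'.flatten ++ t → t = []

/-- p : ℤ → ℤ enumerates increasingly all occurrences of u in x, with p 0 = 0. -/
def IsOccEnum (x : ℤ → A) (u : List A) (p : ℤ → ℤ) : Prop :=
  p 0 = 0 ∧ StrictMono p ∧ (∀ n, occursAt x u (p n)) ∧ ∀ i, occursAt x u i → ∃ n, p n = i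

/-- The n-th return word m_n in the decomposition of x along occurrences p. -/
def retWordAt (x : ℤ → A) (p : ℤ → ℤ) (n : ℤ) : List A :=
  subword x (p n) (p (n + 1) - p n).toNat

/-- (Θ, y) is the canonical return-word coding of x on u:
Θ = Θ_{x,u} (on the letters occurring in y) and y = D_u(x), the derived sequence,
with letters 0,1,2,… given to return words in order of first appearance in (m_i)_{i ≥ 0}. -/
def IsReturnCoding (x : ℤ → A) (u : List A) (Θ : ℕ → List A) (y : ℤ → ℕ) : Prop :=
  ∃ p : ℤ → ℤ, IsOccEnum x u p ∧
    (∀ n : ℤ, Θ (y n) = retWordAt x p n) ∧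
    (∀ n m : ℤ, y n = y m ↔ retWordAt x p n = retWordAt x p m) ∧
    (∀ n : ℤ, ∃ m : ℕ, y m = y n) ∧
    (∀ n : ℕ, y n ≤ Set.ncard { k : ℕ | ∃ m : ℕ, m < n ∧ y m = k })

/-- Letters actually used by a derived sequence. -/
def usedLetters (y : ℤ → ℕ) : Set ℕ := { k | ∃ n : ℤ, y n = k }

/-- Primitivity of a substitution restricted to a set of letters. -/
def IsPrimitiveOn (τ : B → List B) (L : Set B) : Prop :=
  ∃ k : ℕ, 0 < k ∧ ∀ a ∈ L, ∀ b ∈ L, b ∈ substIter τ k a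

/-- τ is the return substitution σ_u, i.e. Θ ∘ τ = σ ∘ Θ on the used letters. -/
def IsReturnSubst (σ : A → List A) (x : ℤ → A) (u : List A)
    (Θ : ℕ → List A) (y : ℤ → ℕ) (τ : ℕ → List ℕ) : Prop :=
  IsReturnCoding x u Θ y ∧
    ∀ k ∈ usedLetters y, (∀ j ∈ τ k, j ∈ usedLetters y) ∧
      wordApply Θ (τ k) = wordApply σ (Θ k)

/-- x is not periodic for the shift. -/
def NotShiftPeriodic (x : ℤ → A) : Prop := ¬ ∃ p : ℤ, p ≠ 0 ∧ ∀ n, x (n + p) = x n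

/-- The splitting ℝ^A = E⁰ ⊕ Eˢ ⊕ Eᵘ ⊕ Eᵇ into M_ξᵗ-invariant subspaces, with
E⁰ killed by M_ξᵗ, Eˢ contracted to 0 but never killed, Eᵘ expanded, Eᵇ bounded
away from 0 and ∞ and never killed. -/
def IsStableSplitting [Fintype A] [DecidableEq A] (σ : A → List A)
    (E0 Es Eu Eb : Submodule ℝ (A → ℝ)) : Prop :=
  (∀ x : A → ℝ, ∃ x0 ∈ E0, ∃ xs ∈ Es, ∃ xu ∈ Eu, ∃ xb ∈ Eb, x = x0 + xs + xu + xb) ∧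
  (∀ x0 ∈ E0, ∀ xs ∈ Es, ∀ xu ∈ Eu, ∀ xb ∈ Eb,
      x0 + xs + xu + xb = 0 → x0 = 0 ∧ xs = 0 ∧ xu = 0 ∧ xb = 0) ∧
  (∀ v ∈ Es, (MtR σ).mulVec v ∈ Es) ∧ (∀ v ∈ Eu, (MtR σ).mulVec v ∈ Eu) ∧
  (∀ v ∈ Eb, (MtR σ).mulVec v ∈ Eb) ∧
  (∀ v ∈ E0, (MtR σ).mulVec v = 0) ∧
  (∀ v ∈ Es, v ≠ 0 → Tendsto (fun k => (MtR σ ^ k).mulVec v) atTop (nhds 0) ∧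
      ∀ n, (MtR σ ^ n).mulVec v ≠ 0) ∧
  (∀ v ∈ Eu, v ≠ 0 → Tendsto (fun k => ‖(MtR σ ^ k).mulVec v‖) atTop atTop) ∧
  (∀ v ∈ Eb, v ≠ 0 → (∃ c C : ℝ, 0 < c ∧ ∀ k : ℕ, c ≤ ‖(MtR σ ^ k).mulVec v‖ ∧
      ‖(MtR σ ^ k).mulVec v‖ ≤ C) ∧ ∀ n, (MtR σ ^ n).mulVec v ≠ 0)

/-- The map F(x) = (Σ_{k ≥ 1} ⟨s_k(x), (M_ξᵗ)ᵏ v(i)⟩)_{1 ≤ i ≤ m}. -/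
noncomputable def Fmap [Fintype A] [DecidableEq A] (σ : A → List A) {m : ℕ}
    (v : Fin m → A → ℝ) (x : ℤ → A) : Fin m → ℝ :=
  fun i => ∑' k : ℕ,
    dotProduct (fun a => ((sVec σ (k + 1) x a : ℤ) : ℝ)) ((MtR σ ^ (k + 1)).mulVec (v i))

/-- The canonical projection ℝ^m → ℝ^m/ℤ^m = 𝕋^m. -/
noncomputable def torusProj {m : ℕ} (z : Fin m → ℝ) : Fin m → AddCircle (1 : ℝ) :=
  fun i => (z i : AddCircle (1 : ℝ))

/-!
A return word `w` to `u` has two properties: `u` is a prefix of `wu`, and `u` occurs in `wu`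
at no position strictly inside `w`. These alone make the set circular. Suppose
`w₁⋯wⱼ = s w'₁⋯w'ₖ t` with `w = ts`, `s ≠ []`, and put `v = w₁⋯wⱼ`, `B = w'₁⋯w'ₖ w`.
Then `sB = vs`, hence `sBᵐ = vᵐs`. For `m = |u|` the word `vᵐ` is at least as long as `u`
and begins with it, so `u` is a prefix of `sBᵐu`; as `u` is also a prefix of `Bᵐu`, it is a
prefix of `su`. So `u` occurs in `wu` at position `|t| < |w|`, which forces `t = []`.
-/

theorem prefix_append_self_of_prefix_append {u s X : List A} (h : u <+: s ++ X) (hX : u <+: X) :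
    u <+: s ++ u := by
  rcases List.prefix_or_prefix_of_prefix h (List.prefix_append s X) with hus | ⟨u', rfl⟩
  · exact hus.trans (List.prefix_append s u)
  · have hu'X : u' <+: X := (List.prefix_append_right_inj s).mp h
    have hu' : u' <+: s ++ u' := List.prefix_of_prefix_length_le hu'X hX (by simp)
    exact (List.prefix_append_right_inj s).mpr hu'

theorem prefix_flatten_append {u : List A} {l : List (List A)} (h : ∀ w ∈ l, u <+: w ++ u) :
    u <+: l.flatten ++ u := by
  induction l with
  | nil => simp
  | cons w l ih =>
    obtain ⟨r, hr⟩ := ih fun v hv => h v (List.mem_cons_of_mem w hv)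
    have hw : u <+: w ++ u ++ r := (h w List.mem_cons_self).trans (List.prefix_append _ r)
    rwa [List.append_assoc, hr, ← List.append_assoc] at hw

theorem prefix_flatten_replicate {u v : List A} (h : u <+: v ++ u) (hv : v ≠ []) :
    u <+: (List.replicate u.length v).flatten := by
  have hpow : u <+: (List.replicate u.length v).flatten ++ u :=
    prefix_flatten_append fun w hw => List.eq_of_mem_replicate hw ▸ h
  refine List.prefix_of_prefix_length_le hpow (List.prefix_append _ u) ?_
  simp only [List.length_flatten, List.map_replicate, List.sum_replicate, smul_eq_mul]
  exact Nat.le_mul_of_pos_right _ (List.length_pos_iff.mpr hv)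

theorem append_flatten_replicate_of_append_eq {s v B : List A} (h : s ++ B = v ++ s) (m : ℕ) :
    s ++ (List.replicate m B).flatten = (List.replicate m v).flatten ++ s := by
  induction m with
  | zero => simp
  | succ m ih =>
    simp only [List.replicate_succ, List.flatten_cons]
    rw [← List.append_assoc, h, List.append_assoc, ih, List.append_assoc]

theorem isCircularCode_of_prefix_of_not_occurs_inside (u : List A) (R : Set (List A))
    (hpre : ∀ w ∈ R, u <+: w ++ u)
    (hinner : ∀ w ∈ R, ∀ t s, w = t ++ s → s ≠ [] → u <+: s ++ u → t = []) :
    IsCircularCode R := by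
  intro l l' w s t hl hl' hw hs hws heq
  refine hinner w hw t s hws hs ?_
  have hconj : s ++ (l'.flatten ++ w) = l.flatten ++ s := by simp [heq, hws]
  have hl_ne : l.flatten ≠ [] := by simp [heq, hs]
  have hlpow : u <+: (List.replicate u.length l.flatten).flatten :=
    prefix_flatten_replicate (prefix_flatten_append fun v hv => hpre v (hl v hv)) hl_ne
  have hBpow : u <+: (List.replicate u.length (l'.flatten ++ w)).flatten ++ u := by
    refine prefix_flatten_append fun v hv => ?_
    rw [List.eq_of_mem_replicate hv, ← List.flatten_concat]
    exact prefix_flatten_append fun v hv => by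
      rcases List.mem_append.mp hv with hv | hv
      exacts [hpre v (hl' v hv), List.mem_singleton.mp hv ▸ hpre w hw]
  refine prefix_append_self_of_prefix_append ?_ hBpow
  rw [← List.append_assoc, append_flatten_replicate_of_append_eq hconj, List.append_assoc]
  exact hlpow.trans (List.prefix_append _ _)

theorem subword_add (x : ℤ → A) (i : ℤ) (a b : ℕ) :
    subword x i (a + b) = subword x i a ++ subword x (i + a) b := by
  simp [subword, List.ofFn_add, add_assoc]

theorem prefix_subword_iff {x : ℤ → A} {u : List A} {i : ℤ} {n : ℕ} (hn : u.length ≤ n) :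
    u <+: subword x i n ↔ occursAt x u i := by
  simp [List.prefix_iff_getElem, subword, occursAt, hn, Fin.forall_iff, eq_comm]

theorem subword_append_of_occursAt {x : ℤ → A} {u : List A} {i : ℤ} {n : ℕ}
    (h : occursAt x u (i + n)) : subword x i n ++ u = subword x i (n + u.length) := by
  rw [subword_add, ← ((prefix_subword_iff le_rfl).mpr h).eq_of_length (by simp [subword])]

theorem exists_subword_of_mem_returnWords {x : ℤ → A} {u w : List A} (hw : w ∈ returnWords x u) :
    ∃ i, occursAt x u i ∧ w ++ u = subword x i (w.length + u.length) ∧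
      ∀ q : ℕ, 0 < q → q < w.length → ¬ occursAt x u (i + q) := by
  obtain ⟨i, j, hij, hi, hj, hnone, rfl⟩ := hw
  have hlen : ((j - i).toNat : ℤ) = j - i := Int.toNat_of_nonneg (by omega)
  have hlen' : (subword x i (j - i).toNat).length = (j - i).toNat := by simp [subword]
  refine ⟨i, hi, ?_, fun q hq hqw => hnone (i + q) (by omega) (by omega)⟩
  rw [hlen', subword_append_of_occursAt (by rwa [hlen, add_sub_cancel])]

theorem prefix_append_of_mem_returnWords {x : ℤ → A} {u w : List A} (hw : w ∈ returnWords x u) :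
    u <+: w ++ u := by
  obtain ⟨i, hi, hwu, -⟩ := exists_subword_of_mem_returnWords hw
  rw [hwu]
  exact (prefix_subword_iff (by omega)).mpr hi

theorem eq_nil_of_mem_returnWords {x : ℤ → A} {u w t s : List A} (hw : w ∈ returnWords x u)
    (hts : w = t ++ s) (hs : s ≠ []) (hsu : u <+: s ++ u) : t = [] := by
  obtain ⟨i, -, hwu, hnone⟩ := exists_subword_of_mem_returnWords hw
  have hslen : 0 < s.length := List.length_pos_iff.mpr hs
  subst hts
  rw [List.append_assoc, List.length_append, add_assoc, subword_add] at hwu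
  have hsu' : s ++ u = subword x (i + t.length) (s.length + u.length) :=
    (List.append_inj hwu (by simp [subword])).2
  rw [hsu', prefix_subword_iff (by omega)] at hsu
  by_contra ht
  exact hnone t.length (List.length_pos_iff.mpr ht) (by simp [hslen]) hsu

theorem return_words_circular_code_general {A : Type*} (x : ℤ → A) (u : List A) :
    IsCircularCode (returnWords x u) :=
  isCircularCode_of_prefix_of_not_occurs_inside u _ (fun _ => prefix_append_of_mem_returnWords)
    fun _ hw _ _ => eq_nil_of_mem_returnWords hw

/-- For a uniformly recurrent x ∈ A^ℤ and a nonempty prefix u of x,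
the set of return words to u of x is a circular code. -/
theorem return_words_circular_code {A : Type*} (x : ℤ → A) (u : List A)
    (hur : UniformlyRecurrent x) (hu : u ≠ []) (hpref : occursAt x u 0) :
    IsCircularCode (returnWords x u) :=
  return_words_circular_code_general x u

end PisotDE
end

section
/- Let ξ be a primitive proper substitution on a finite alphabet A and suppose exp(2iπα_1),…,exp(2iπα_{d-1}) are eigenvalues of (Ω_ξ, S, μ) such that 1, α_1,…,α_{d-1} are rationally independent. Let v(i) ∈ ℝ^A and w(i) ∈ ℤ^A satisfy α_i H(1) = v(i) + w(i), M_ξ^t w(i) ∈ ℤ^A and (M_ξ^t)^n v(i) → 0 for each i. Then both families of vectors {M_ξ^t v(1),…,M_ξ^t v(d-1)} and {M_ξ^t H(1), M_ξ^t w(1),…,M_ξ^t w(d-1)} are linearly independent over ℝ. -/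
open MeasureTheory Filter Matrix Set

namespace PisotDE

variable {A B : Type*}

/-!
Write `L = Mᵗ H(1)` and `z i = Mᵗ w(i)`; both are integer vectors and `Mᵗ v(i) = α i • L - z i`.
Integer vectors that admit no nontrivial integer relation are independent over `ℝ`, and an
integer relation `e₀ L + ∑ eᵢ z i = 0` reads `γ • L = Mᵗ y` with `γ = e₀ + ∑ eᵢ α i` and
`y = ∑ eᵢ v(i)`. Iterating, `γ • (Mᵗ)ⁿ L = (Mᵗ)ⁿ⁺¹ y → 0`, whereas `(Mᵗ)ⁿ L ≥ 1` entrywise since no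
`ξ a` is empty; so `γ = 0`, and rational independence of `1, α` gives `e = 0`. The family
`Mᵗ v(i) = α i • L - z i` is then independent as well.
-/

section LinearAlgebra

variable {K V : Type*} [CommRing K] [AddCommGroup V] [Module K V]

theorem linearIndependent_smul_sub_of_fin_cons {m : ℕ} {L : V} {z : Fin m → V} (α : Fin m → K)
    (h : LinearIndependent K (Fin.cons L z : Fin (m + 1) → V)) :
    LinearIndependent K fun i => α i • L - z i := by
  rw [Fintype.linearIndependent_iff] at h ⊢
  intro g hg i
  have hrel : ∑ j, (Fin.cons (∑ k, g k * α k) (-g) : Fin (m + 1) → K) j •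
      (Fin.cons L z : Fin (m + 1) → V) j = 0 := by
    rw [Fin.sum_univ_succ, ← hg]
    simp only [Fin.cons_zero, Fin.cons_succ, Pi.neg_apply, neg_smul, Finset.sum_neg_distrib,
      Finset.sum_smul, smul_sub, smul_smul, Finset.sum_sub_distrib, ← sub_eq_add_neg]
  simpa using h _ hrel i.succ

theorem linearIndependent_of_forall_int_relation {ι n : Type*} [Fintype ι] [Finite n]
    {f : ι → n → ℝ} (hint : ∀ i a, ∃ t : ℤ, f i a = t)
    (hrel : ∀ e : ι → ℤ, ∑ i, (e i : ℝ) • f i = 0 → e = 0) :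
    LinearIndependent ℝ f := by
  choose F hF using hint
  have hf : f = fun i => algebraMap ℤ ℝ ∘ F i := funext fun i => funext (hF i)
  rw [hf, linearIndependent_algebraMap_comp_iff, Fintype.linearIndependent_iff]
  intro e he
  refine congrFun (hrel e ?_)
  ext a
  simpa [hF] using congrArg (fun u : n → ℤ => (u a : ℝ)) he

end LinearAlgebra

section MatrixDynamics

variable {n : Type*} [Fintype n] [DecidableEq n] {M : Matrix n n ℝ}

theorem eq_zero_of_smul_eq_mulVec {γ : ℝ} {L y : n → ℝ} (h : γ • L = M *ᵥ y)
    (hy : Tendsto (fun k : ℕ => M ^ k *ᵥ y) atTop (nhds 0))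
    (hL : ¬Tendsto (fun k : ℕ => M ^ k *ᵥ L) atTop (nhds 0)) : γ = 0 := by
  by_contra hγ
  have hk : ∀ k : ℕ, γ⁻¹ • (M ^ (k + 1) *ᵥ y) = M ^ k *ᵥ L := fun k => by
    rw [pow_succ, ← mulVec_mulVec, ← h, mulVec_smul, inv_smul_smul₀ hγ]
  have := (hy.comp (tendsto_add_atTop_nat 1)).const_smul γ⁻¹
  rw [smul_zero] at this
  exact hL (this.congr hk)

theorem add_sum_mul_eq_zero_of_relation {m : ℕ} {α : Fin m → ℝ} {L : n → ℝ}
    {v z : Fin m → n → ℝ} (hz : ∀ i, z i = α i • L - M *ᵥ v i)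
    (hv : ∀ i, Tendsto (fun k : ℕ => M ^ k *ᵥ v i) atTop (nhds 0))
    (hL : ¬Tendsto (fun k : ℕ => M ^ k *ᵥ L) atTop (nhds 0))
    {c : Fin (m + 1) → ℝ} (hc : ∑ j, c j • (Fin.cons L z : Fin (m + 1) → n → ℝ) j = 0) :
    c 0 + ∑ i, c i.succ * α i = 0 := by
  refine eq_zero_of_smul_eq_mulVec (y := ∑ i, c i.succ • v i) ?_ ?_ hL
  · rw [Fin.sum_univ_succ] at hc
    simp only [Fin.cons_zero, Fin.cons_succ, hz, smul_sub, smul_smul, Finset.sum_sub_distrib,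
      ← Finset.sum_smul, ← add_sub_assoc, ← add_smul, sub_eq_zero] at hc
    rw [hc, mulVec_sum]
    simp only [mulVec_smul]
  · simp only [mulVec_sum, mulVec_smul]
    simpa using tendsto_finsetSum Finset.univ fun i _ => (hv i).const_smul (c i.succ)

theorem linearIndependent_fin_cons_of_ratIndepOne {m : ℕ} {α : Fin m → ℝ} {L : n → ℝ}
    {v z : Fin m → n → ℝ} (hind : RatIndepOne α) (hz : ∀ i, z i = α i • L - M *ᵥ v i)
    (hv : ∀ i, Tendsto (fun k : ℕ => M ^ k *ᵥ v i) atTop (nhds 0))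
    (hL : ¬Tendsto (fun k : ℕ => M ^ k *ᵥ L) atTop (nhds 0))
    (hLint : ∀ a, ∃ t : ℤ, L a = t) (hzint : ∀ i a, ∃ t : ℤ, z i a = t) :
    LinearIndependent ℝ (Fin.cons L z : Fin (m + 1) → n → ℝ) := by
  refine linearIndependent_of_forall_int_relation (fun j => ?_) fun e he => ?_
  · cases j using Fin.cases
    exacts [hLint, hzint _]
  · obtain ⟨h0, hsucc⟩ := hind (e 0) (fun i => e i.succ) <| by
      exact_mod_cast add_sum_mul_eq_zero_of_relation hz hv hL he
    ext j
    cases j using Fin.cases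
    exacts [h0, hsucc _]

end MatrixDynamics

section IncidenceMatrix

theorem IsSubstitution.ne_nil {ξ : A → List A} (h : IsSubstitution ξ) (a : A) : ξ a ≠ [] := by
  intro ha
  have hnil : ∀ k, substIter ξ (k + 1) a = [] := fun k => by
    simp [substIter, wordApply, ha]
  obtain ⟨k, hk⟩ := ((h.2 a).eventually_gt_atTop 0).exists_forall_of_atTop
  simpa [hnil] using hk (k + 1) k.le_succ

variable [Fintype A] [DecidableEq A] {ξ : A → List A}

theorem MtR_apply (a b : A) : MtR ξ a b = (ξ a).count b := rfl

theorem sum_MtR_apply (a : A) : ∑ b, MtR ξ a b = (ξ a).length := by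
  have h := Multiset.sum_count_eq_card (s := Finset.univ) (m := (ξ a : Multiset A)) (by simp)
  simp only [Multiset.coe_count, Multiset.coe_card] at h
  simp only [MtR_apply]
  exact_mod_cast h

theorem MtR_mulVec_one_apply (a : A) : (MtR ξ *ᵥ fun _ => 1) a = (ξ a).length := by
  simp [mulVec, dotProduct, sum_MtR_apply]

theorem one_le_MtR_mulVec_apply {a : A} (ha : ξ a ≠ []) {u : A → ℝ} (hu : ∀ b, 1 ≤ u b) :
    1 ≤ (MtR ξ *ᵥ u) a :=
  calc (1 : ℝ) ≤ (ξ a).length := by exact_mod_cast List.length_pos_iff.mpr ha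
    _ = ∑ b, MtR ξ a b := (sum_MtR_apply a).symm
    _ ≤ ∑ b, MtR ξ a b * u b :=
      Finset.sum_le_sum fun b _ => le_mul_of_one_le_right (Nat.cast_nonneg _) (hu b)
    _ = (MtR ξ *ᵥ u) a := rfl

theorem IsSubstitution.one_le_MtR_pow_mulVec_apply (h : IsSubstitution ξ) {u : A → ℝ}
    (hu : ∀ b, 1 ≤ u b) (k : ℕ) (a : A) : 1 ≤ (MtR ξ ^ k *ᵥ u) a := by
  induction k generalizing a with
  | zero => simpa using hu a
  | succ k ih =>
    rw [pow_succ', ← mulVec_mulVec]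
    exact one_le_MtR_mulVec_apply (h.ne_nil a) ih

theorem IsSubstitution.not_tendsto_MtR_pow_mulVec_zero (h : IsSubstitution ξ) (u : A → ℝ)
    (hu : ∀ b, 1 ≤ u b) : ¬Tendsto (fun k : ℕ => MtR ξ ^ k *ᵥ u) atTop (nhds 0) := by
  intro h0
  obtain ⟨a, -⟩ := h.1
  have := ge_of_tendsto' (tendsto_pi_nhds.1 h0 a) fun k => h.one_le_MtR_pow_mulVec_apply hu k a
  norm_num at this

end IncidenceMatrix

theorem eigenvector_families_linearly_independent_general {A : Type*} [Fintype A] [DecidableEq A]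
    (ξ : A → List A) (hsub : IsSubstitution ξ)
    (d : ℕ) (α : Fin (d - 1) → ℝ)
    (hind : RatIndepOne α)
    (v : Fin (d - 1) → A → ℝ) (w : Fin (d - 1) → A → ℤ)
    (hvw : ∀ i, ∀ a : A, α i = v i a + (w i a : ℝ))
    (hwZ : ∀ i, ∀ a : A, ∃ z : ℤ, ((MtR ξ).mulVec fun b => ((w i b : ℤ) : ℝ)) a = (z : ℝ))
    (hv0 : ∀ i, Tendsto (fun n : ℕ => (MtR ξ ^ n).mulVec (v i)) atTop (nhds 0)) :
    LinearIndependent ℝ (fun i : Fin (d - 1) => (MtR ξ).mulVec (v i)) ∧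
    LinearIndependent ℝ
      (Fin.cons ((MtR ξ).mulVec fun _ : A => (1 : ℝ))
        (fun i : Fin (d - 1) => (MtR ξ).mulVec fun b => ((w i b : ℤ) : ℝ)) :
        Fin (d - 1 + 1) → (A → ℝ)) := by
  have hL := hsub.not_tendsto_MtR_pow_mulVec_zero _ fun a =>
    one_le_MtR_mulVec_apply (hsub.ne_nil a) fun _ => le_rfl
  have hz : ∀ i, (MtR ξ *ᵥ fun b => ((w i b : ℤ) : ℝ)) =
      α i • (MtR ξ *ᵥ fun _ => 1) - MtR ξ *ᵥ v i := fun i => by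
    rw [← mulVec_smul, ← mulVec_sub]
    congr 1
    funext b
    simp [hvw i b]
  have hcons := linearIndependent_fin_cons_of_ratIndepOne hind hz hv0 hL
    (fun a => ⟨(ξ a).length, by simp [MtR_mulVec_one_apply]⟩) hwZ
  have hMv : (fun i => MtR ξ *ᵥ v i) = fun i =>
      α i • (MtR ξ *ᵥ fun _ => 1) - MtR ξ *ᵥ fun b => ((w i b : ℤ) : ℝ) :=
    funext fun i => by rw [hz i, sub_sub_cancel]
  rw [hMv]
  exact ⟨linearIndependent_smul_sub_of_fin_cons α hcons, hcons⟩

/-- if exp(2iπα_1),…,exp(2iπα_{d-1}) are eigenvalues with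
1, α_1, …, α_{d-1} rationally independent, then the families
{M_ξᵗv(1),…,M_ξᵗv(d-1)} and {M_ξᵗH(1), M_ξᵗw(1),…,M_ξᵗw(d-1)} are linearly
independent over ℝ. -/
theorem eigenvector_families_linearly_independent {A : Type*} [Fintype A] [DecidableEq A]
    [MeasurableSpace A]
    (ξ : A → List A) (hsub : IsSubstitution ξ) (hprim : IsPrimitive ξ)
    (hproper : IsProper ξ)
    (μ : Measure (ℤ → A)) (hμ : IsProbabilityMeasure μ)
    (hinv : MeasurePreserving shift μ μ) (hsupp : μ (Omega ξ) = 1)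
    (d : ℕ) (α : Fin (d - 1) → ℝ)
    (heig : ∀ i, IsEigenvalue μ (Complex.exp (2 * Real.pi * Complex.I * (α i))))
    (hind : RatIndepOne α)
    (v : Fin (d - 1) → A → ℝ) (w : Fin (d - 1) → A → ℤ)
    (hvw : ∀ i, ∀ a : A, α i = v i a + (w i a : ℝ))
    (hwZ : ∀ i, ∀ a : A, ∃ z : ℤ, ((MtR ξ).mulVec fun b => ((w i b : ℤ) : ℝ)) a = (z : ℝ))
    (hv0 : ∀ i, Tendsto (fun n : ℕ => (MtR ξ ^ n).mulVec (v i)) atTop (nhds 0)) :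
    LinearIndependent ℝ (fun i : Fin (d - 1) => (MtR ξ).mulVec (v i)) ∧
    LinearIndependent ℝ
      (Fin.cons ((MtR ξ).mulVec fun _ : A => (1 : ℝ))
        (fun i : Fin (d - 1) => (MtR ξ).mulVec fun b => ((w i b : ℤ) : ℝ)) :
        Fin (d - 1 + 1) → (A → ℝ)) :=
  eigenvector_families_linearly_independent_general ξ hsub d α hind v w hvw hwZ hv0

end PisotDE
end

section
/- Let ξ be a primitive proper substitution on a finite alphabet A (replaced by a power if necessary so that the invariant splitting ℝ^A = E^0 ⊕ E^s ⊕ E^u ⊕ E^b for M_ξ^t exists). Suppose (Ω_ξ, S, μ) admits d−1 eigenvalues exp(2iπα_1),…,exp(2iπα_{d-1}), and let v(i) ∈ ℝ^A, w(i) ∈ ℤ^A satisfy α_i H(1) = v(i) + w(i), M_ξ^t w(i) ∈ ℤ^A, (M_ξ^t)^n v(i) → 0, with each v(i) having no component in E^0. Then the vector space E_ξ = span(v(1),…,v(d-1)) is a subspace of E^s. Moreover, if 1, α_1,…,α_{d-1} are rationally independent, then d − 1 ≤ dim E^s. -/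
open MeasureTheory Filter Matrix Set

namespace PisotDE

variable {A B : Type*}

/-!
If (M_ξᵗ)ⁿ v → 0 and v = s + u + b with s ∈ Eˢ, u ∈ Eᵘ, b ∈ Eᵇ, then the orbit of u = (v - s) - b
is bounded, so u = 0, and then the orbit of b tends to 0 while staying away from 0, so b = 0.

For the dimension bound, an integer relation ∑ zᵢ w(i) = γ H(1) gives ∑ zᵢ v(i) = (∑ zᵢ αᵢ - γ) H(1),
a vector of Eˢ. Since ξ is proper, the row sums of M_ξᵗ are at least 1, so M_ξᵗ contracts no nonzero
multiple of H(1); hence ∑ zᵢ αᵢ = γ and z = 0 by rational independence. So the integer vectors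
w(i) - w(i)_{a₀} H(1) are linearly independent over ℤ, hence over ℝ, and so are the v(i).
-/

section PowMulVec

variable {ι : Type*} [Fintype ι] [DecidableEq ι]

theorem one_le_pow_mulVec_one {M : Matrix ι ι ℝ} (hM : ∀ i j, 0 ≤ M i j)
    (hrow : ∀ i, 1 ≤ ∑ j, M i j) (n : ℕ) : 1 ≤ M ^ n *ᵥ 1 := by
  induction n with
  | zero => simp
  | succ n ih =>
    intro i
    rw [pow_succ', ← mulVec_mulVec]
    calc (1 : ι → ℝ) i ≤ ∑ j, M i j * 1 := by simpa using hrow i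
      _ ≤ ∑ j, M i j * (M ^ n *ᵥ 1) j :=
        Finset.sum_le_sum fun j _ => mul_le_mul_of_nonneg_left (ih j) (hM i j)

theorem eq_zero_of_tendsto_pow_mulVec_smul_one {M : Matrix ι ι ℝ} (hM : ∀ i j, 0 ≤ M i j)
    (hrow : ∀ i, 1 ≤ ∑ j, M i j) (i : ι) {t : ℝ}
    (h : Tendsto (fun n => M ^ n *ᵥ (t • 1)) atTop (nhds 0)) : t = 0 := by
  have habs : ∀ n, |t| ≤ |(M ^ n *ᵥ (t • 1)) i| := fun n => by
    rw [mulVec_smul, Pi.smul_apply, smul_eq_mul, abs_mul]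
    exact le_mul_of_one_le_right (abs_nonneg t)
      ((one_le_pow_mulVec_one hM hrow n i).trans (le_abs_self _))
  have hlim : Tendsto (fun n => |(M ^ n *ᵥ (t • 1)) i|) atTop (nhds 0) := by
    simpa using ((continuous_apply i).tendsto _ |>.comp h).abs
  exact abs_nonpos_iff.mp (ge_of_tendsto' hlim habs)

end PowMulVec

theorem IsLeftProper.one_le_sum_mtR {A : Type*} [Fintype A] [DecidableEq A] {σ : A → List A}
    (hσ : IsLeftProper σ) (a : A) : 1 ≤ ∑ b, MtR σ a b := by
  obtain ⟨h, hh⟩ := hσ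
  have hmem : h ∈ σ a := List.mem_of_mem_head? (hh a)
  calc (1 : ℝ) ≤ MtR σ a h := by
        simpa [MtR, incMat, Nat.one_le_iff_ne_zero, List.count_eq_zero] using hmem
    _ ≤ ∑ b, MtR σ a b :=
        Finset.single_le_sum (fun b _ => by simp [MtR]) (Finset.mem_univ h)

namespace IsStableSplitting

variable {A : Type*} [Fintype A] [DecidableEq A] {σ : A → List A}
  {E0 Es Eu Eb : Submodule ℝ (A → ℝ)}

theorem tendsto_of_mem_stable (h : IsStableSplitting σ E0 Es Eu Eb) {s : A → ℝ} (hs : s ∈ Es) :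
    Tendsto (fun n => MtR σ ^ n *ᵥ s) atTop (nhds 0) := by
  obtain ⟨-, -, -, -, -, -, hEs, -, -⟩ := h
  by_cases hs0 : s = 0
  · simp [hs0]
  · exact (hEs s hs hs0).1

theorem isBigO_one_of_mem_bounded (h : IsStableSplitting σ E0 Es Eu Eb) {b : A → ℝ}
    (hb : b ∈ Eb) : (fun n => MtR σ ^ n *ᵥ b) =O[atTop] (fun _ => (1 : ℝ)) := by
  obtain ⟨-, -, -, -, -, -, -, -, hEb⟩ := h
  by_cases hb0 : b = 0
  · simpa [hb0] using isBoundedUnder_const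
  · obtain ⟨⟨_, C, _, hC⟩, -⟩ := hEb b hb hb0
    exact (Asymptotics.isBigO_one_iff ℝ).mpr
      ⟨C, eventually_map.mpr (.of_forall fun n => (hC n).2)⟩

theorem eq_zero_of_mem_unstable (h : IsStableSplitting σ E0 Es Eu Eb) {u : A → ℝ}
    (hu : u ∈ Eu)
    (hO : (fun n => MtR σ ^ n *ᵥ u) =O[atTop] (fun _ => (1 : ℝ))) : u = 0 := by
  obtain ⟨-, -, -, -, -, -, -, hEu, -⟩ := h
  by_contra hu0
  exact not_isBoundedUnder_of_tendsto_atTop (hEu u hu hu0)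
    ((Asymptotics.isBigO_one_iff ℝ).mp hO)

theorem eq_zero_of_mem_bounded (h : IsStableSplitting σ E0 Es Eu Eb) {b : A → ℝ} (hb : b ∈ Eb)
    (hlim : Tendsto (fun n => MtR σ ^ n *ᵥ b) atTop (nhds 0)) : b = 0 := by
  obtain ⟨-, -, -, -, -, -, -, -, hEb⟩ := h
  by_contra hb0
  obtain ⟨⟨c, _, hc, hbd⟩, -⟩ := hEb b hb hb0
  obtain ⟨n, hn⟩ := (by simpa using hlim.norm : Tendsto _ atTop (nhds (0 : ℝ)))
    |>.eventually_lt_const hc |>.exists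
  exact (hbd n).1.not_gt hn

theorem mem_stable_of_tendsto (h : IsStableSplitting σ E0 Es Eu Eb) {v : A → ℝ}
    (hv : v ∈ Es ⊔ Eu ⊔ Eb) (hlim : Tendsto (fun n => MtR σ ^ n *ᵥ v) atTop (nhds 0)) :
    v ∈ Es := by
  obtain ⟨y, hy, b, hb, rfl⟩ := Submodule.mem_sup.mp hv
  obtain ⟨s, hs, u, hu, rfl⟩ := Submodule.mem_sup.mp hy
  have hub : Tendsto (fun n => MtR σ ^ n *ᵥ (u + b)) atTop (nhds 0) := by
    simpa [mulVec_add, add_assoc] using hlim.sub (h.tendsto_of_mem_stable hs)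
  have hu0 : u = 0 := h.eq_zero_of_mem_unstable hu <| by
    simpa [mulVec_add] using hub.isBigO_one ℝ |>.sub (h.isBigO_one_of_mem_bounded hb)
  have hb0 : b = 0 := h.eq_zero_of_mem_bounded hb (by simpa [hu0] using hub)
  simpa [hu0, hb0] using hs

theorem disjoint_stable_span_one (h : IsStableSplitting σ E0 Es Eu Eb) (hσ : IsLeftProper σ) :
    Disjoint Es (ℝ ∙ (1 : A → ℝ)) := by
  rw [Submodule.disjoint_def]
  intro x hxs hx1
  obtain ⟨t, rfl⟩ := Submodule.mem_span_singleton.mp hx1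
  have ⟨a, _⟩ := hσ
  have ht := eq_zero_of_tendsto_pow_mulVec_smul_one (fun _ _ => by simp [MtR])
    hσ.one_le_sum_mtR a (h.tendsto_of_mem_stable hxs)
  simp [ht]

end IsStableSplitting

theorem RatIndepOne.linearIndependent {A : Type*} [Fintype A] {m : ℕ} {α : Fin m → ℝ}
    (hα : RatIndepOne α) {v : Fin m → A → ℝ} {w : Fin m → A → ℤ}
    (hvw : ∀ i a, α i = v i a + w i a) (a₀ : A)
    (hdisj : Disjoint (Submodule.span ℝ (range v)) (ℝ ∙ (1 : A → ℝ))) :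
    LinearIndependent ℝ v := by
  -- `L x = x a₀ • 1 - x` removes the constant part α i of v i and leaves an integer vector.
  let L : (A → ℝ) →ₗ[ℝ] (A → ℝ) := (LinearMap.proj a₀).smulRight 1 - LinearMap.id
  let u : Fin m → A → ℤ := fun i a => w i a - w i a₀
  have hLv : L ∘ v = fun i => algebraMap ℤ ℝ ∘ u i := by
    ext i a
    simp only [Function.comp_apply, LinearMap.sub_apply, LinearMap.coe_smulRight,
      LinearMap.coe_proj, Function.eval, LinearMap.id_coe, id_eq, Pi.sub_apply, Pi.smul_apply,
      Pi.one_apply, smul_eq_mul, mul_one, algebraMap_int_eq, Int.coe_castRingHom, Int.cast_sub,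
      L, u]
    linarith [hvw i a, hvw i a₀]
  refine LinearIndependent.of_comp L ?_
  rw [hLv, linearIndependent_algebraMap_comp_iff, Fintype.linearIndependent_iff]
  intro z hz
  set γ : ℤ := ∑ i, z i * w i a₀
  set t : ℝ := ∑ i, (z i : ℝ) * α i - γ
  have hcomb : ∑ i, (z i : ℝ) • v i = t • 1 := by
    ext a
    have hza : ∑ i, (z i : ℝ) * w i a = γ := by
      have := congrFun hz a
      simp only [u, zsmul_eq_mul, Finset.sum_apply, Pi.mul_apply, Pi.intCast_apply, Int.cast_eq,
        mul_sub, Finset.sum_sub_distrib, Pi.zero_apply] at this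
      exact_mod_cast (sub_eq_zero.mp this)
    simp only [Finset.sum_apply, Pi.smul_apply, smul_eq_mul, Pi.one_apply, mul_one]
    simp only [t, ← hza, ← Finset.sum_sub_distrib, ← mul_sub]
    exact Finset.sum_congr rfl fun i _ => by rw [hvw i a, add_sub_cancel_right]
  have ht : t = 0 := by
    have h0 := Submodule.disjoint_def.mp hdisj _
      (Submodule.sum_mem _ fun i _ =>
        Submodule.smul_mem _ _ (Submodule.subset_span (mem_range_self i)))
      (hcomb ▸ Submodule.smul_mem _ t (Submodule.mem_span_singleton_self _))
    simpa using congrFun (hcomb.symm.trans h0) a₀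
  exact (hα (-γ) z (by push_cast; linarith)).2

theorem span_v_subset_stable_general {A : Type*} [Fintype A] [DecidableEq A]
    (ξ : A → List A)
    (hproper : IsProper ξ)
    (E0 Es Eu Eb : Submodule ℝ (A → ℝ))
    (hsplit : IsStableSplitting ξ E0 Es Eu Eb)
    (d : ℕ) (α : Fin (d - 1) → ℝ)
    (v : Fin (d - 1) → A → ℝ) (w : Fin (d - 1) → A → ℤ)
    (hvw : ∀ i, ∀ a : A, α i = v i a + (w i a : ℝ))
    (hv0 : ∀ i, Tendsto (fun n : ℕ => (MtR ξ ^ n).mulVec (v i)) atTop (nhds 0))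
    (hvE0 : ∀ i, v i ∈ Es ⊔ Eu ⊔ Eb) :
    Submodule.span ℝ (Set.range v) ≤ Es ∧
      (RatIndepOne α → d - 1 ≤ Module.finrank ℝ Es) := by
  have hspan : Submodule.span ℝ (range v) ≤ Es :=
    Submodule.span_le.mpr <| range_subset_iff.mpr fun i =>
      hsplit.mem_stable_of_tendsto (hvE0 i) (hv0 i)
  refine ⟨hspan, fun hα => ?_⟩
  obtain ⟨a₀, -⟩ := hproper.1
  have hli : LinearIndependent ℝ v :=
    hα.linearIndependent hvw a₀ ((hsplit.disjoint_stable_span_one hproper.1).mono_left hspan)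
  calc d - 1 = Module.finrank ℝ (Submodule.span ℝ (range v)) := by
        rw [finrank_span_eq_card hli, Fintype.card_fin]
    _ ≤ Module.finrank ℝ Es := Submodule.finrank_mono hspan

/-- the span of the vectors v(i) is contained in Eˢ; if moreover
1, α_1, …, α_{d-1} are rationally independent, then d − 1 ≤ dim Eˢ. -/
theorem span_v_subset_stable {A : Type*} [Fintype A] [DecidableEq A]
    [MeasurableSpace A]
    (ξ : A → List A) (hsub : IsSubstitution ξ) (hprim : IsPrimitive ξ)
    (hproper : IsProper ξ)
    (μ : Measure (ℤ → A)) (hμ : IsProbabilityMeasure μ)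
    (hinv : MeasurePreserving shift μ μ) (hsupp : μ (Omega ξ) = 1)
    (E0 Es Eu Eb : Submodule ℝ (A → ℝ))
    (hsplit : IsStableSplitting ξ E0 Es Eu Eb)
    (d : ℕ) (α : Fin (d - 1) → ℝ)
    (heig : ∀ i, IsEigenvalue μ (Complex.exp (2 * Real.pi * Complex.I * (α i))))
    (v : Fin (d - 1) → A → ℝ) (w : Fin (d - 1) → A → ℤ)
    (hvw : ∀ i, ∀ a : A, α i = v i a + (w i a : ℝ))
    (hwZ : ∀ i, ∀ a : A, ∃ z : ℤ, ((MtR ξ).mulVec fun b => ((w i b : ℤ) : ℝ)) a = (z : ℝ))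
    (hv0 : ∀ i, Tendsto (fun n : ℕ => (MtR ξ ^ n).mulVec (v i)) atTop (nhds 0))
    (hvE0 : ∀ i, v i ∈ Es ⊔ Eu ⊔ Eb) :
    Submodule.span ℝ (Set.range v) ≤ Es ∧
      (RatIndepOne α → d - 1 ≤ Module.finrank ℝ Es) :=
  span_v_subset_stable_general ξ hproper E0 Es Eu Eb hsplit d α v w hvw hv0 hvE0

end PisotDE
end
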